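/- arXiv:2505.24218 — 3 statements merged into one kernel-verified Lean document; each statement's English description precedes it below -/
import Mathlib

section
/- For each point (x,p) in S = F⁻¹(1) ⊂ ℂ^{n+r} (where F(x,p) = Σ|xⱼ|² − Σdₖ|pₖ|²), the U(1)-orbits {e^{iθ}·(x,p) : θ ∈ ℝ} under the action e^{iθ}·(x,p) = (e^{iθ}x₁,…,e^{iθ}xₙ,e^{-id₁θ}p₁,…,e^{-id_rθ}p_r) are exactly the fibers of the restriction to S of the quotient map φ : (ℂⁿ∖{0}) × ℂ^r → X_CY by the ℂ*-charge action; consequently S/U(1) is in bijection with X_CY. -/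
open Complex

/-!
Along a `ℂ*`-orbit the function `F` depends only on `t = |λ|`, namely
`F(λ·(x,p)) = t² Σ|xⱼ|² − Σ dₖ|pₖ|²/t^{2dₖ}`, which for `x ≠ 0` is continuous and strictly
increasing on `(0, ∞)`, with values below `1` near `0` and above `1` for large `t`.
Strict monotonicity forces `|λ| = 1`, i.e. `λ = e^{iθ}`, when both ends of the orbit segment lie on
`S`; the intermediate value theorem puts a point of `S` on every orbit.
-/

section ChargeAction

variable {ι κ : Type*} [Fintype ι] [Fintype κ] (d : κ → ℕ) (x : ι → ℂ) (p : κ → ℂ)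

noncomputable def momentMap : ℝ :=
  ∑ j, ‖x j‖ ^ 2 - ∑ k, (d k : ℝ) * ‖p k‖ ^ 2

lemma momentMap_le : momentMap d x p ≤ ∑ j, ‖x j‖ ^ 2 :=
  sub_le_self _ (Finset.sum_nonneg fun k _ => by positivity)

lemma sum_norm_sq_pos {x : ι → ℂ} (hx : x ≠ 0) : 0 < ∑ j, ‖x j‖ ^ 2 := by
  obtain ⟨j, hj⟩ := Function.ne_iff.1 hx
  exact Finset.sum_pos' (fun i _ => by positivity)
    ⟨j, Finset.mem_univ j, pow_pos (norm_pos_iff.2 hj) 2⟩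

noncomputable def chargeProfile (t : ℝ) : ℝ :=
  t ^ 2 * ∑ j, ‖x j‖ ^ 2 - ∑ k, (d k : ℝ) * ‖p k‖ ^ 2 / (t ^ d k) ^ 2

lemma momentMap_charge_smul (lam : ℂ) :
    momentMap d (fun j => lam * x j) (fun k => (lam ^ d k)⁻¹ * p k) =
      chargeProfile d x p ‖lam‖ := by
  simp only [momentMap, chargeProfile, norm_mul, norm_inv, norm_pow, mul_pow, Finset.mul_sum]
  congr 1
  refine Finset.sum_congr rfl fun k _ => ?_
  rw [inv_pow]
  ring

lemma chargeProfile_one : chargeProfile d x p 1 = momentMap d x p := by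
  simp [chargeProfile, momentMap]

lemma strictMonoOn_chargeProfile (hx : 0 < ∑ j, ‖x j‖ ^ 2) :
    StrictMonoOn (chargeProfile d x p) (Set.Ioi 0) := by
  intro s hs t _ hst
  have hs : 0 < s := hs
  have hquad : s ^ 2 * ∑ j, ‖x j‖ ^ 2 < t ^ 2 * ∑ j, ‖x j‖ ^ 2 :=
    mul_lt_mul_of_pos_right (pow_lt_pow_left₀ hst hs.le two_ne_zero) hx
  have hdecay : ∑ k, (d k : ℝ) * ‖p k‖ ^ 2 / (t ^ d k) ^ 2 ≤
      ∑ k, (d k : ℝ) * ‖p k‖ ^ 2 / (s ^ d k) ^ 2 :=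
    Finset.sum_le_sum fun k _ => div_le_div_of_nonneg_left (by positivity) (by positivity)
      (pow_le_pow_left₀ (by positivity) (pow_le_pow_left₀ hs.le hst.le _) _)
  simp only [chargeProfile]
  linarith

lemma continuousOn_chargeProfile : ContinuousOn (chargeProfile d x p) (Set.Ioi 0) := by
  unfold chargeProfile
  exact (continuousOn_pow 2).mul continuousOn_const |>.sub <|
    continuousOn_finsetSum _ fun k _ => continuousOn_const.div (continuousOn_pow _ |>.pow 2)
      fun t (ht : 0 < t) => by positivity

lemma exists_chargeProfile_eq_one (hx : 0 < ∑ j, ‖x j‖ ^ 2) :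
    ∃ t, 0 < t ∧ chargeProfile d x p t = 1 := by
  set A := ∑ j, ‖x j‖ ^ 2
  set C := ∑ k, (d k : ℝ) * ‖p k‖ ^ 2
  -- below `1` at `t₀ = 1/(A+1)` since the `p`-part is nonnegative
  have hlow : chargeProfile d x p (1 / (A + 1)) ≤ 1 := by
    have hdecay : 0 ≤ ∑ k, (d k : ℝ) * ‖p k‖ ^ 2 / ((1 / (A + 1)) ^ d k) ^ 2 :=
      Finset.sum_nonneg fun k _ => by positivity
    have hquad : (1 / (A + 1)) ^ 2 * A ≤ 1 := by
      rw [div_pow, one_pow, one_div_mul_eq_div, div_le_one (by positivity)]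
      nlinarith
    simp only [chargeProfile]
    linarith
  -- above `1` at `t₁ = (C+1)/A + 1` since for `t ≥ 1` the `p`-part is at most `C`
  have hhigh : 1 ≤ chargeProfile d x p ((C + 1) / A + 1) := by
    set t := (C + 1) / A + 1
    have ht : 1 ≤ t := le_add_of_nonneg_left (by positivity)
    have hdecay : ∑ k, (d k : ℝ) * ‖p k‖ ^ 2 / (t ^ d k) ^ 2 ≤ C :=
      Finset.sum_le_sum fun k _ => div_le_self (by positivity) (one_le_pow₀ (one_le_pow₀ ht))
    have hquad : C + 1 ≤ t ^ 2 * A := by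
      have : C + 1 ≤ t * A := by
        simp only [t]; rw [add_mul, div_mul_cancel₀ _ hx.ne']; linarith
      nlinarith [mul_nonneg (sub_nonneg.2 ht) (mul_nonneg (zero_le_one.trans ht) hx.le)]
    simp only [chargeProfile]
    linarith
  obtain ⟨t, ht, hval⟩ := isPreconnected_Ioi.intermediate_value
    (show 0 < 1 / (A + 1) by positivity) (show 0 < (C + 1) / A + 1 by positivity)
    (continuousOn_chargeProfile d x p) ⟨hlow, hhigh⟩
  exact ⟨t, ht, hval⟩

lemma norm_eq_one_of_momentMap_charge_smul {lam : ℂ} (hlam : lam ≠ 0) (hS : momentMap d x p = 1)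
    (hS' : momentMap d (fun j => lam * x j) (fun k => (lam ^ d k)⁻¹ * p k) = 1) : ‖lam‖ = 1 := by
  have hx : 0 < ∑ j, ‖x j‖ ^ 2 := one_pos.trans_le (hS ▸ momentMap_le d x p)
  refine (strictMonoOn_chargeProfile d x p hx).injOn (norm_pos_iff.2 hlam)
    (Set.mem_Ioi.2 one_pos) ?_
  rw [← momentMap_charge_smul, chargeProfile_one, hS, hS']

end ChargeAction

lemma inv_pow_exp_mul_I (θ : ℝ) (m : ℕ) : (exp (θ * I) ^ m)⁻¹ = exp (-((m : ℝ) * θ) * I) := by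
  rw [← exp_nat_mul, ← exp_neg]
  push_cast
  ring_nf

theorem S_mod_U1_is_XCY_general
    (n r : ℕ) (d : Fin r → ℕ) :
    (∀ (x : Fin n → ℂ) (p : Fin r → ℂ) (x' : Fin n → ℂ) (p' : Fin r → ℂ),
      ((∑ j, ‖x j‖ ^ 2) - ∑ k, (d k : ℝ) * ‖p k‖ ^ 2 = 1) →
      ((∑ j, ‖x' j‖ ^ 2) - ∑ k, (d k : ℝ) * ‖p' k‖ ^ 2 = 1) →
      ((∃ lam : ℂ, lam ≠ 0 ∧ (∀ j, x' j = lam * x j) ∧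
          (∀ k, p' k = (lam ^ d k)⁻¹ * p k)) ↔
        (∃ θ : ℝ, (∀ j, x' j = Complex.exp (θ * Complex.I) * x j) ∧
          (∀ k, p' k = Complex.exp (-((d k : ℝ) * θ) * Complex.I) * p k)))) ∧
    (∀ (x : Fin n → ℂ) (p : Fin r → ℂ), x ≠ 0 →
      ∃ (x' : Fin n → ℂ) (p' : Fin r → ℂ),
        ((∑ j, ‖x' j‖ ^ 2) - ∑ k, (d k : ℝ) * ‖p' k‖ ^ 2 = 1) ∧
        ∃ lam : ℂ, lam ≠ 0 ∧ (∀ j, x j = lam * x' j) ∧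
          (∀ k, p k = (lam ^ d k)⁻¹ * p' k)) := by
  refine ⟨fun x p x' p' hS hS' => ⟨?_, ?_⟩, fun x p hx => ?_⟩
  · rintro ⟨lam, hlam, hx, hp⟩
    obtain rfl : x' = _ := funext hx
    obtain rfl : p' = _ := funext hp
    obtain ⟨θ, rfl⟩ :=
      (norm_eq_one_iff lam).1 (norm_eq_one_of_momentMap_charge_smul d x p hlam hS hS')
    exact ⟨θ, fun j => rfl, fun k => congrArg (· * p k) (inv_pow_exp_mul_I θ (d k))⟩
  · rintro ⟨θ, hx, hp⟩
    exact ⟨exp (θ * I), exp_ne_zero _, hx, fun k => by rw [hp k, inv_pow_exp_mul_I]⟩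
  · obtain ⟨t, ht, hS⟩ := exists_chargeProfile_eq_one d x p (sum_norm_sq_pos hx)
    have ht' : (t : ℂ) ≠ 0 := ofReal_ne_zero.2 ht.ne'
    refine ⟨fun j => t * x j, fun k => ((t : ℂ) ^ d k)⁻¹ * p k, ?_, (t : ℂ)⁻¹, inv_ne_zero ht',
      fun j => (inv_mul_cancel_left₀ ht' _).symm,
      fun k => by rw [inv_pow, inv_inv, mul_inv_cancel_left₀ (pow_ne_zero _ ht')]⟩
    rwa [← Real.norm_of_nonneg ht.le, ← norm_real, ← momentMap_charge_smul] at hS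

/-- On `S = F⁻¹(1)` (where `F(x,p) = Σ|xⱼ|² − Σ dₖ|pₖ|²`), two points of `S`
lie in the same orbit of the `ℂ*`-charge action `λ·(x,p) = (λx, λ^{-d}p)` iff they lie in the
same `U(1)`-orbit `e^{iθ}·(x,p) = (e^{iθ}x, e^{-i dₖ θ}pₖ)`; moreover every point of
`(ℂⁿ∖{0}) × ℂʳ` is charge-equivalent to a point of `S`.  Hence `S/U(1)` is in bijection
with `X_CY`. -/
theorem S_mod_U1_is_XCY
    (n r : ℕ) (hn : 0 < n) (hr : 0 < r) (d : Fin r → ℕ) (hd : ∀ k, 0 < d k) :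
    (∀ (x : Fin n → ℂ) (p : Fin r → ℂ) (x' : Fin n → ℂ) (p' : Fin r → ℂ),
      ((∑ j, ‖x j‖ ^ 2) - ∑ k, (d k : ℝ) * ‖p k‖ ^ 2 = 1) →
      ((∑ j, ‖x' j‖ ^ 2) - ∑ k, (d k : ℝ) * ‖p' k‖ ^ 2 = 1) →
      ((∃ lam : ℂ, lam ≠ 0 ∧ (∀ j, x' j = lam * x j) ∧
          (∀ k, p' k = (lam ^ d k)⁻¹ * p k)) ↔
        (∃ θ : ℝ, (∀ j, x' j = Complex.exp (θ * Complex.I) * x j) ∧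
          (∀ k, p' k = Complex.exp (-((d k : ℝ) * θ) * Complex.I) * p k)))) ∧
    (∀ (x : Fin n → ℂ) (p : Fin r → ℂ), x ≠ 0 →
      ∃ (x' : Fin n → ℂ) (p' : Fin r → ℂ),
        ((∑ j, ‖x' j‖ ^ 2) - ∑ k, (d k : ℝ) * ‖p' k‖ ^ 2 = 1) ∧
        ∃ lam : ℂ, lam ≠ 0 ∧ (∀ j, x j = lam * x' j) ∧
          (∀ k, p k = (lam ^ d k)⁻¹ * p' k)) :=
  S_mod_U1_is_XCY_general n r d
end

section
/- Let W = Σⱼ pⱼWⱼ with Wⱼ homogeneous of degree dⱼ, and suppose there is a constant c > 0 such that on S, for |(x,p)| large, all coordinates satisfy |xⱼ|,|pₖ| ≤ c(|𝒟W|+1)^{1/d_min}, where 𝒟^k W denotes the tensor of all k-th partial derivatives of W in the ambient coordinates and |𝒟^kW|² = Σ |∂_{j₁}⋯∂_{j_k}W|². If d_max ≤ 2d_min − 1, then for every k ≥ 2 and every ε > 0 and C > 0, for |(x,p)| ∈ S sufficiently large: |𝒟^k W| ≤ ε|𝒟W|^k − C. In other words ε|𝒟W|^k − |𝒟^kW|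 → +∞ as (x,p) → ∞ in S. -/
/-!
The `k`-th derivatives of `W` are polynomials of degree at most `d_max + 1 - k`, hence
`|𝒟^kW| = O((‖(x,p)‖ + 1)^(d_max + 1 - k))`. Far out on `S` the coordinate hypothesis gives
`‖(x,p)‖ ≤ c s` with `s = (|𝒟W| + 1)^(1/d_min)`, which in turn forces `s → ∞`. In terms of `s`,
`|𝒟^kW| = O(s^(d_max + 1 - k))` while `|𝒟W|^k = (s^d_min - 1)^k ~ s^(d_min k)`, and
`d_max ≤ 2 d_min - 1`, `k ≥ 2` give `d_max + 1 - k < d_min k`.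
-/

open MvPolynomial

noncomputable section

/-- The hybrid potential `W = Σₖ pₖ Wₖ`. -/
def Wtot (n r : ℕ) (W : Fin r → MvPolynomial (Fin n) ℂ) :
    MvPolynomial (Fin n ⊕ Fin r) ℂ :=
  ∑ k : Fin r, X (Sum.inr k) * rename Sum.inl (W k)

/-- `|𝒟^k W|²` at `(x,p)`: the sum of the squared absolute values of all `k`-th order
partial derivatives of `W` in the flat ambient coordinates. -/
def derivNormSq (n r : ℕ) (W : Fin r → MvPolynomial (Fin n) ℂ) (k : ℕ)
    (x : Fin n → ℂ) (p : Fin r → ℂ) : ℝ :=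
  ∑ js : Fin k → (Fin n ⊕ Fin r),
    ‖eval (Sum.elim x p) ((List.ofFn js).foldr (fun i q => pderiv i q) (Wtot n r W))‖ ^ 2

open Filter Asymptotics

namespace MvPolynomial

variable {σ R : Type*}

theorem totalDegree_pderiv_le [CommSemiring R] [DecidableEq σ] (f : MvPolynomial σ R) (i : σ) :
    (pderiv i f).totalDegree ≤ f.totalDegree - 1 := by
  conv_lhs => rw [f.as_sum, map_sum]
  refine (totalDegree_finsetSum _ _).trans (Finset.sup_le fun s hs => ?_)
  rw [pderiv_monomial]
  by_cases hsi : s i = 0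
  · simp [hsi]
  have hsplit : s - Finsupp.single i 1 + Finsupp.single i 1 = s :=
    tsub_add_cancel_of_le (Finsupp.single_le_iff.2 (Nat.one_le_iff_ne_zero.2 hsi))
  have hdeg := congrArg Finsupp.degree hsplit
  rw [map_add, Finsupp.degree_single] at hdeg
  have hs_le : s.degree ≤ f.totalDegree := le_totalDegree hs
  refine (totalDegree_monomial_le _ _).trans ?_
  change (s - Finsupp.single i 1).degree ≤ _
  omega

theorem totalDegree_foldr_pderiv_le [CommSemiring R] [DecidableEq σ] (l : List σ)
    (f : MvPolynomial σ R) :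
    (l.foldr (fun i q => pderiv i q) f).totalDegree ≤ f.totalDegree - l.length := by
  induction l with
  | nil => simp
  | cons i l ih =>
    have := totalDegree_pderiv_le (l.foldr (fun i q => pderiv i q) f) i
    simp only [List.foldr_cons, List.length_cons]
    omega

theorem exists_norm_eval_le_mul_norm_add_one_pow [Fintype σ] {𝕜 : Type*} [NormedCommRing 𝕜]
    [NormOneClass 𝕜] {Q : MvPolynomial σ 𝕜} {D : ℕ} (hQ : Q.totalDegree ≤ D) :
    ∃ A ≥ 0, ∀ v : σ → 𝕜, ‖eval v Q‖ ≤ A * (‖v‖ + 1) ^ D := by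
  refine ⟨∑ s ∈ Q.support, ‖coeff s Q‖, by positivity, fun v => ?_⟩
  have hv : ∀ i, ‖v i‖ ≤ ‖v‖ + 1 := fun i =>
    (norm_le_pi_norm v i).trans (le_add_of_nonneg_right zero_le_one)
  rw [eval_eq, Finset.sum_mul]
  refine (norm_sum_le _ _).trans (Finset.sum_le_sum fun s hs => ?_)
  refine (norm_mul_le _ _).trans (mul_le_mul_of_nonneg_left ?_ (norm_nonneg _))
  calc ‖∏ i ∈ s.support, v i ^ s i‖
      ≤ ∏ i ∈ s.support, (‖v‖ + 1) ^ s i :=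
        (Finset.norm_prod_le _ _).trans <| Finset.prod_le_prod (fun _ _ => norm_nonneg _)
          fun i _ => (norm_pow_le _ _).trans (pow_le_pow_left₀ (norm_nonneg _) (hv i) _)
    _ = (‖v‖ + 1) ^ s.degree := Finset.prod_pow_eq_pow_sum _ _ _
    _ ≤ (‖v‖ + 1) ^ D :=
        pow_le_pow_right₀ (le_add_of_nonneg_left (norm_nonneg _)) ((le_totalDegree hs).trans hQ)

end MvPolynomial

theorem sqrt_sum_norm_sq_le_sqrt_card_mul_norm {ι E : Type*} [Fintype ι]
    [SeminormedAddCommGroup E]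
    (v : ι → E) : √(∑ i, ‖v i‖ ^ 2) ≤ √(Fintype.card ι) * ‖v‖ := by
  have hsum : ∑ i, ‖v i‖ ^ 2 ≤ Fintype.card ι * ‖v‖ ^ 2 := by
    simpa using Finset.sum_le_sum fun i (_ : i ∈ Finset.univ) =>
      pow_le_pow_left₀ (norm_nonneg _) (norm_le_pi_norm v i) 2
  calc √(∑ i, ‖v i‖ ^ 2) ≤ √(Fintype.card ι * ‖v‖ ^ 2) := Real.sqrt_le_sqrt hsum
    _ = √(Fintype.card ι) * ‖v‖ := by
        rw [Real.sqrt_mul (by positivity), Real.sqrt_sq (norm_nonneg _)]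

theorem tendsto_mul_sub_one_pow_sub_atTop {g : ℝ → ℝ} {m k e : ℕ} {ε : ℝ} (hε : 0 < ε)
    (he : e < m * k) (hg : g =O[atTop] (· ^ e)) :
    Tendsto (fun s => ε * (s ^ m - 1) ^ k - g s) atTop atTop := by
  have hm : 0 < m := Nat.pos_of_mul_pos_right (e.zero_le.trans_lt he)
  have h_sub : (fun s : ℝ => s ^ m - 1) ~[atTop] (· ^ m) :=
    IsEquivalent.refl.sub_isLittleO (by simpa using isLittleO_pow_pow_atTop_of_lt (𝕜 := ℝ) hm)
  have h_lead : (fun s : ℝ => ε * (s ^ m - 1) ^ k) ~[atTop] fun s => ε * s ^ (m * k) := by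
    simp only [pow_mul]
    exact IsEquivalent.refl.mul (h_sub.pow k)
  have h_small : g =o[atTop] fun s => ε * s ^ (m * k) :=
    hg.trans_isLittleO ((isLittleO_pow_pow_atTop_of_lt he).const_mul_right' hε.ne'.isUnit)
  exact (h_lead.sub_isLittleO h_small).symm.tendsto_atTop
    ((tendsto_pow_atTop (e.zero_le.trans_lt he).ne').const_mul_atTop hε)

theorem isBigO_mul_mul_add_one_pow (B c : ℝ) (e : ℕ) :
    (fun s : ℝ => B * (c * s + 1) ^ e) =O[atTop] (· ^ e) := by
  have h : (fun s : ℝ => c * s + 1) =O[atTop] id :=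
    ((isBigO_refl _ _).const_mul_left c).add (isLittleO_const_id_atTop 1).isBigO
  exact (h.pow e).const_mul_left B

theorem totalDegree_Wtot_le {n r D : ℕ} {W : Fin r → MvPolynomial (Fin n) ℂ}
    (hW : ∀ k, (W k).totalDegree ≤ D) : (Wtot n r W).totalDegree ≤ D + 1 := by
  refine totalDegree_finsetSum_le fun k _ => (totalDegree_mul _ _).trans ?_
  rw [totalDegree_X, add_comm]
  exact Nat.add_le_add_right ((totalDegree_rename_le _ _).trans (hW k)) 1

theorem exists_sqrt_derivNormSq_le {n r D : ℕ} {W : Fin r → MvPolynomial (Fin n) ℂ}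
    (hW : ∀ k, (W k).totalDegree ≤ D) (k : ℕ) :
    ∃ B ≥ 0, ∀ x p, √(derivNormSq n r W k x p) ≤ B * (‖Sum.elim x p‖ + 1) ^ (D + 1 - k) := by
  classical
  have hdeg (js : Fin k → Fin n ⊕ Fin r) :
      ((List.ofFn js).foldr (fun i q => pderiv i q) (Wtot n r W)).totalDegree ≤ D + 1 - k := by
    have := totalDegree_foldr_pderiv_le (List.ofFn js) (Wtot n r W)
    have := totalDegree_Wtot_le hW
    rw [List.length_ofFn] at *
    omega
  choose A hA using fun js => exists_norm_eval_le_mul_norm_add_one_pow (hdeg js)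
  refine ⟨√(∑ js, A js ^ 2), Real.sqrt_nonneg _, fun x p => ?_⟩
  have hsq : derivNormSq n r W k x p
      ≤ (∑ js, A js ^ 2) * ((‖Sum.elim x p‖ + 1) ^ (D + 1 - k)) ^ 2 := by
    rw [derivNormSq, Finset.sum_mul]
    refine Finset.sum_le_sum fun js _ => ?_
    rw [← mul_pow]
    exact pow_le_pow_left₀ (norm_nonneg _) ((hA js).2 _) 2
  calc √(derivNormSq n r W k x p)
      ≤ √((∑ js, A js ^ 2) * ((‖Sum.elim x p‖ + 1) ^ (D + 1 - k)) ^ 2) := Real.sqrt_le_sqrt hsq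
    _ = √(∑ js, A js ^ 2) * (‖Sum.elim x p‖ + 1) ^ (D + 1 - k) := by
        rw [Real.sqrt_mul (by positivity), Real.sqrt_sq (by positivity)]

theorem strong_ellipticity_estimate_general
    (n r : ℕ) (d : Fin r → ℕ) (hd : ∀ k, 0 < d k)
    (dmin dmax : ℕ) (hdmin : IsLeast (Set.range d) dmin)
    (hdmax : IsGreatest (Set.range d) dmax)
    (hd2 : dmax ≤ 2 * dmin - 1)
    (W : Fin r → MvPolynomial (Fin n) ℂ)
    (hW : ∀ k, (W k).IsHomogeneous (d k))
    (hcoord : ∃ c > (0 : ℝ), ∃ R : ℝ, ∀ (x : Fin n → ℂ) (p : Fin r → ℂ),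
      ((∑ j, ‖x j‖ ^ 2) - ∑ k, (d k : ℝ) * ‖p k‖ ^ 2 = 1) →
      R ≤ Real.sqrt ((∑ j, ‖x j‖ ^ 2) + ∑ k, ‖p k‖ ^ 2) →
      (∀ j, ‖x j‖ ≤ c * (Real.sqrt (derivNormSq n r W 1 x p) + 1) ^ ((1 : ℝ) / dmin)) ∧
      (∀ k, ‖p k‖ ≤ c * (Real.sqrt (derivNormSq n r W 1 x p) + 1) ^ ((1 : ℝ) / dmin))) :
    ∀ k : ℕ, 2 ≤ k → ∀ ε > (0 : ℝ), ∀ C : ℝ, ∃ R' : ℝ,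
      ∀ (x : Fin n → ℂ) (p : Fin r → ℂ),
        ((∑ j, ‖x j‖ ^ 2) - ∑ k', (d k' : ℝ) * ‖p k'‖ ^ 2 = 1) →
        R' ≤ Real.sqrt ((∑ j, ‖x j‖ ^ 2) + ∑ k', ‖p k'‖ ^ 2) →
        Real.sqrt (derivNormSq n r W k x p)
          ≤ ε * (Real.sqrt (derivNormSq n r W 1 x p)) ^ k - C := by
  intro k hk ε hε C
  obtain ⟨c, hc, R₀, hcoord⟩ := hcoord
  obtain ⟨j₀, hj₀⟩ := hdmin.1
  have hdmin_pos : 0 < dmin := hj₀ ▸ hd j₀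
  have hexp : dmax + 1 - k < dmin * k := by
    have := Nat.mul_le_mul_left dmin hk
    omega
  obtain ⟨B, hB, hDk⟩ := exists_sqrt_derivNormSq_le
    (fun j => (hW j).totalDegree_le.trans (hdmax.2 ⟨j, rfl⟩)) k
  obtain ⟨s₀, hs₀⟩ := eventually_atTop.1 <| (tendsto_mul_sub_one_pow_sub_atTop hε hexp
    (isBigO_mul_mul_add_one_pow B c _)).eventually_ge_atTop C
  refine ⟨max R₀ (√(n + r) * (c * s₀) + 1), fun x p hS hR => ?_⟩
  set t := √(derivNormSq n r W 1 x p)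
  set s := (t + 1) ^ ((1 : ℝ) / dmin)
  have hv : ‖Sum.elim x p‖ ≤ c * s := by
    obtain ⟨hx, hp⟩ := hcoord x p hS ((le_max_left _ _).trans hR)
    exact (pi_norm_le_iff_of_nonneg (by positivity)).2 (Sum.forall.2 ⟨hx, hp⟩)
  have hs : s₀ ≤ s := by
    by_contra! hlt
    have hN : √(∑ j, ‖x j‖ ^ 2 + ∑ k, ‖p k‖ ^ 2) ≤ √(n + r) * ‖Sum.elim x p‖ := by
      simpa [Fintype.sum_sum_type] using sqrt_sum_norm_sq_le_sqrt_card_mul_norm (Sum.elim x p)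
    have := mul_le_mul_of_nonneg_left (hv.trans (mul_le_mul_of_nonneg_left hlt.le hc.le))
      (Real.sqrt_nonneg (n + r))
    linarith [le_max_right R₀ (√(n + r) * (c * s₀) + 1)]
  have ht : s ^ dmin - 1 = t := by
    rw [show s = (t + 1) ^ (dmin⁻¹ : ℝ) by rw [← one_div],
      Real.rpow_inv_natCast_pow (by positivity) hdmin_pos.ne', add_sub_cancel_right]
  calc √(derivNormSq n r W k x p) ≤ B * (‖Sum.elim x p‖ + 1) ^ (dmax + 1 - k) := hDk x p
    _ ≤ B * (c * s + 1) ^ (dmax + 1 - k) := by gcongr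
    _ ≤ ε * t ^ k - C := by linarith [ht ▸ hs₀ s hs]

/-- Assume `W = Σ pⱼWⱼ` (with `Wⱼ` homogeneous of degree `dⱼ`) satisfies the
coordinate bound `|xⱼ|,|pₖ| ≤ c(|𝒟W|+1)^{1/d_min}` on `S` for `|(x,p)|` large, and
`d_max ≤ 2 d_min − 1`.  Then for every `k ≥ 2`, `ε > 0` and `C`, one has
`|𝒟^k W| ≤ ε |𝒟W|^k − C` on `S` for `|(x,p)|` sufficiently large; i.e.
`ε|𝒟W|^k − |𝒟^kW| → +∞` as `(x,p) → ∞` in `S`. -/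
theorem strong_ellipticity_estimate
    (n r : ℕ) (hn : 0 < n) (hr : 0 < r) (d : Fin r → ℕ) (hd : ∀ k, 0 < d k)
    (dmin dmax : ℕ) (hdmin : IsLeast (Set.range d) dmin)
    (hdmax : IsGreatest (Set.range d) dmax)
    (hd2 : dmax ≤ 2 * dmin - 1)
    (W : Fin r → MvPolynomial (Fin n) ℂ)
    (hW : ∀ k, (W k).IsHomogeneous (d k))
    (hcoord : ∃ c > (0 : ℝ), ∃ R : ℝ, ∀ (x : Fin n → ℂ) (p : Fin r → ℂ),
      ((∑ j, ‖x j‖ ^ 2) - ∑ k, (d k : ℝ) * ‖p k‖ ^ 2 = 1) →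
      R ≤ Real.sqrt ((∑ j, ‖x j‖ ^ 2) + ∑ k, ‖p k‖ ^ 2) →
      (∀ j, ‖x j‖ ≤ c * (Real.sqrt (derivNormSq n r W 1 x p) + 1) ^ ((1 : ℝ) / dmin)) ∧
      (∀ k, ‖p k‖ ≤ c * (Real.sqrt (derivNormSq n r W 1 x p) + 1) ^ ((1 : ℝ) / dmin))) :
    ∀ k : ℕ, 2 ≤ k → ∀ ε > (0 : ℝ), ∀ C : ℝ, ∃ R' : ℝ,
      ∀ (x : Fin n → ℂ) (p : Fin r → ℂ),
        ((∑ j, ‖x j‖ ^ 2) - ∑ k', (d k' : ℝ) * ‖p k'‖ ^ 2 = 1) →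
        R' ≤ Real.sqrt ((∑ j, ‖x j‖ ^ 2) + ∑ k', ‖p k'‖ ^ 2) →
        Real.sqrt (derivNormSq n r W k x p)
          ≤ ε * (Real.sqrt (derivNormSq n r W 1 x p)) ^ k - C :=
  strong_ellipticity_estimate_general n r d hd dmin dmax hdmin hdmax hd2 W hW hcoord
end
end

section
/- With W = Σ_{l=1}^r p_l W_l, W_l homogeneous of degree d_l, the following identity of algebraic 2-forms holds on each chart {xⱼ ≠ 0}: Σ_{l=1}^r (1/d_l) d(W_l/xⱼ^{d_l}) ∧ d(xⱼ^{d_l} p_l) = Σ_{l=1}^r (1/d_l) dW_l ∧ dp_l + dW ∧ (dxⱼ/xⱼ). Consequently, for any j,k: Σ_{l=1}^r (1/d_l)[ d(W_l/xⱼ^{d_l}) ∧ d(xⱼ^{d_l}p_l) − d(W_l/xₖ^{d_l}) ∧ d(xₖ^{d_l}p_l) ] = dW ∧ (dxⱼ/xⱼ − dxₖ/xₖ). -/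
/-!
With `i = 1/x` one has `d(w iᵐ) = iᵐ (dw - m w i dx)` and `d(xᵐ p) = xᵐ (dp + m p i dx)`.
Since `dx ∧ dx = 0` and `(x i)ᵐ = 1`, their wedge is `dw ∧ dp + m (p dw + w dp) ∧ (dx/x)`.
Dividing by `m = d_l` and summing over `l` turns `Σ (p_l dW_l + W_l dp_l)` into `dW`, which is the
first identity; the second is its difference for the charts `j` and `k`.
-/

open MvPolynomial

set_option synthInstance.maxHeartbeats 1000000
set_option maxHeartbeats 2000000

noncomputable section

variable (n r : ℕ)

/-- The polynomial ring `ℂ[x₁,…,xₙ,p₁,…,p_r]`. -/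
abbrev PRing (n r : ℕ) := MvPolynomial (Fin n ⊕ Fin r) ℂ

/-- The localization `ℂ[x,p][1/(xⱼxₖ)]`. -/
abbrev LRing (n r : ℕ) (j k : Fin n) : Type :=
  Localization.Away (X (Sum.inl j) * X (Sum.inl k) : PRing n r)

open ExteriorAlgebra

theorem ExteriorAlgebra.ι_sub_smul_mul_ι_add_smul {R M : Type*} [CommRing R] [AddCommGroup M]
    [Module R M] (a b c : M) (s t : R) :
    ι R (a - s • c) * ι R (b + t • c) = ι R a * ι R b + ι R (t • a + s • b) * ι R c := by
  have hcb : ι R c * ι R b = -(ι R b * ι R c) :=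
    eq_neg_of_add_eq_zero_left (ι_add_mul_swap c b)
  simp only [map_add, map_sub, map_smul, add_mul, sub_mul, mul_add, mul_smul_comm,
    smul_mul_assoc, ι_sq_zero, hcb]
  module

namespace Derivation

variable {R A M : Type*} [CommRing R] [CommRing A] [Algebra R A] [AddCommGroup M] [Module A M]
  [Module R M] (D : Derivation R A M) {x i : A}

theorem map_mul_pow_of_mul_eq_one (hxi : x * i = 1) (w : A) (m : ℕ) :
    D (w * i ^ m) = i ^ m • (D w - ((m : A) * w * i) • D x) := by
  rw [leibniz, leibniz_pow, D.leibniz_of_mul_eq_one (mul_comm x i ▸ hxi)]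
  rcases m with _ | m
  · simp
  · rw [Nat.add_sub_cancel]
    match_scalars <;> ring

theorem map_pow_mul_of_mul_eq_one (hxi : x * i = 1) (p : A) (m : ℕ) :
    D (x ^ m * p) = x ^ m • (D p + ((m : A) * p * i) • D x) := by
  rw [leibniz, leibniz_pow]
  rcases m with _ | m
  · simp
  · rw [Nat.add_sub_cancel]
    match_scalars
    · ring
    · linear_combination (-(p * ((m : A) + 1) * x ^ m)) * hxi

theorem ι_map_mul_pow_mul_ι_map_pow_mul_of_mul_eq_one (hxi : x * i = 1) (w p : A) (m : ℕ) :
    ι A (D (w * i ^ m)) * ι A (D (x ^ m * p))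
      = ι A (D w) * ι A (D p) + (m : A) • (ι A (p • D w + w • D p) * ι A (i • D x)) := by
  have hpow : i ^ m * x ^ m = 1 := by rw [← mul_pow, mul_comm, hxi, one_pow]
  rw [D.map_mul_pow_of_mul_eq_one hxi, D.map_pow_mul_of_mul_eq_one hxi, LinearMap.map_smul,
    LinearMap.map_smul, smul_mul_smul_comm, hpow, one_smul, ι_sub_smul_mul_ι_add_smul,
    show ((m : A) * p * i) • D w + ((m : A) * w * i) • D p = ((m : A) * i) • (p • D w + w • D p)
      by module, LinearMap.map_smul, LinearMap.map_smul, mul_smul_comm, smul_mul_assoc, smul_smul]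

theorem sum_smul_ι_map_mul_pow_mul_ι_map_pow_mul_of_mul_eq_one {L : Type*} [Fintype L]
    (hxi : x * i = 1) (c : L → A) (m : L → ℕ) (hcm : ∀ l, c l * m l = 1) (w p : L → A) :
    ∑ l, c l • (ι A (D (w l * i ^ m l)) * ι A (D (x ^ m l * p l)))
      = ∑ l, c l • (ι A (D (w l)) * ι A (D (p l)))
        + ι A (D (∑ l, p l * w l)) * (i • ι A (D x)) := by
  calc ∑ l, c l • (ι A (D (w l * i ^ m l)) * ι A (D (x ^ m l * p l)))
      = ∑ l, (c l • (ι A (D (w l)) * ι A (D (p l)))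
          + ι A (p l • D (w l) + w l • D (p l)) * (i • ι A (D x))) :=
        Finset.sum_congr rfl fun l _ => by
          rw [D.ι_map_mul_pow_mul_ι_map_pow_mul_of_mul_eq_one hxi, smul_add, smul_smul, hcm,
            one_smul, LinearMap.map_smul]
    _ = _ := by
        rw [Finset.sum_add_distrib, ← Finset.sum_mul, map_sum, map_sum]
        simp only [leibniz]

end Derivation

theorem two_form_identities
    (d : Fin r → ℕ) (hd : ∀ l, 0 < d l)
    (W : Fin r → MvPolynomial (Fin n) ℂ)
    (j k : Fin n) :
    letI A := LRing n r j k
    letI φ := algebraMap (PRing n r) A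
    letI u : A := IsLocalization.Away.invSelf (X (Sum.inl j) * X (Sum.inl k) : PRing n r)
    letI invxj : A := φ (X (Sum.inl k)) * u
    letI invxk : A := φ (X (Sum.inl j)) * u
    letI xj : A := φ (X (Sum.inl j))
    letI xk : A := φ (X (Sum.inl k))
    letI D := KaehlerDifferential.D ℂ A
    letI ι := ExteriorAlgebra.ι A (M := KaehlerDifferential ℂ A)
    letI Wa : Fin r → A := fun l => φ (rename Sum.inl (W l))
    letI pa : Fin r → A := fun l => φ (X (Sum.inr l))
    letI Wt : A := φ (∑ l : Fin r, X (Sum.inr l) * rename Sum.inl (W l))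
    letI c : Fin r → A := fun l => algebraMap ℂ A ((d l : ℂ)⁻¹)
    ((∑ l : Fin r, c l • (ι (D (Wa l * invxj ^ d l)) * ι (D (xj ^ d l * pa l))))
        = (∑ l : Fin r, c l • (ι (D (Wa l)) * ι (D (pa l))))
          + ι (D Wt) * (invxj • ι (D xj))) ∧
    ((∑ l : Fin r, c l •
          ((ι (D (Wa l * invxj ^ d l)) * ι (D (xj ^ d l * pa l)))
            - (ι (D (Wa l * invxk ^ d l)) * ι (D (xk ^ d l * pa l)))))
        = ι (D Wt) * (invxj • ι (D xj) - invxk • ι (D xk))) := by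
  set A := LRing n r j k
  set φ := algebraMap (PRing n r) A
  set u : A := IsLocalization.Away.invSelf (X (Sum.inl j) * X (Sum.inl k) : PRing n r)
  have hj : φ (X (Sum.inl j)) * (φ (X (Sum.inl k)) * u) = 1 := by
    rw [← mul_assoc, ← map_mul]
    exact IsLocalization.Away.mul_invSelf _
  have hk : φ (X (Sum.inl k)) * (φ (X (Sum.inl j)) * u) = 1 := by
    rw [← mul_assoc, ← map_mul, mul_comm (X (Sum.inl k))]
    exact IsLocalization.Away.mul_invSelf _
  have hcd (l : Fin r) : algebraMap ℂ A ((d l : ℂ)⁻¹) * (d l : A) = 1 := by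
    rw [← map_natCast (algebraMap ℂ A), ← map_mul,
      inv_mul_cancel₀ (Nat.cast_ne_zero.2 (hd l).ne'), map_one]
  have chart := fun {x i : A} (hxi : x * i = 1) =>
    (KaehlerDifferential.D ℂ A).sum_smul_ι_map_mul_pow_mul_ι_map_pow_mul_of_mul_eq_one hxi _ d
      hcd (fun l => φ (rename Sum.inl (W l))) (fun l => φ (X (Sum.inr l)))
  have hWt : φ (∑ l : Fin r, X (Sum.inr l) * rename Sum.inl (W l))
      = ∑ l : Fin r, φ (X (Sum.inr l)) * φ (rename Sum.inl (W l)) := by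
    simp only [map_sum, map_mul]
  rw [hWt]
  refine ⟨chart hj, ?_⟩
  beta_reduce
  simp only [smul_sub, Finset.sum_sub_distrib]
  rw [chart hj, chart hk, mul_sub]
  abel
end
end
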